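/- arXiv:2303.01506 — 2 statements merged into one kernel-verified Lean document; each statement's English description precedes it below -/
import Mathlib

section
/- Let f : ℝⁿ → ℝ be a multivariate polynomial, x ∈ ℝⁿ an input, and μ a probability measure on ℝⁿ with finite moments of all orders. For every i ∈ N, the Expected Gradients attribution satisfies E_{b∼μ}[ (x_i − b_i) · ∫_0^1 (∂f/∂x_i)(b + α(x − b)) dα ] = E_{b∼μ}[ ∑_{κ ∈ Ω_i} φ(κ | b) + ∑_{S ⊆ N, |S| > 1, i ∈ S} ∑_{κ ∈ Ω_S} (κ_i / ∑_{j ∈ N} κ_j) · I(κ | b) ]. -/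
/-!
For a fixed baseline `b` the statement is a pointwise identity, integrated against `μ`.
Write `f` as a sum of monomials `∏ j, (y j - b j) ^ κ j` centred at `b`. Along the segment
`b + α (x - b)` such a monomial is `α ^ |κ|` times its value at `x`, so
`(x i - b i) * ∂ᵢ` of it equals `κ i * α ^ (|κ| - 1)` times that value, and integrating over
`α ∈ [0, 1]` gives the share `κ i / |κ|` of the monomial's effect. Grouping the exponents
by support, the share is `1` for pure powers of `x i - b i` and `0` for monomials not
involving `i`.
-/

open Finset MeasureTheory

lemma natCast_mul_integral_pow_pred {k d : ℕ} (hkd : k ≤ d) :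
    (k : ℝ) * ∫ α in (0:ℝ)..1, α ^ (d - 1) = k / d := by
  rcases Nat.eq_zero_or_pos d with rfl | hd
  · simp [Nat.le_zero.mp hkd]
  · rw [integral_pow, Nat.cast_pred hd]
    simp [div_eq_mul_inv]

section
variable {ι : Type*} [Fintype ι] [DecidableEq ι]

lemma fderiv_prod_sub_pow_apply_single (b z : ι → ℝ) (κ : ι →₀ ℕ) (i : ι) :
    fderiv ℝ (fun y : ι → ℝ => ∏ j, (y j - b j) ^ κ j) z (Pi.single i 1)
      = κ i * ((z i - b i) ^ (κ i - 1) * ∏ l ∈ univ.erase i, (z l - b l) ^ κ l) := by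
  have hderiv : HasFDerivAt (fun y : ι → ℝ => ∏ j, (y j - b j) ^ κ j)
      (∑ j, (∏ l ∈ univ.erase j, (z l - b l) ^ κ l) •
        (((κ j : ℝ) * (z j - b j) ^ (κ j - 1)) •
          ContinuousLinearMap.proj (R := ℝ) (φ := fun _ : ι => ℝ) j)) z :=
    HasFDerivAt.finsetProd fun j _ =>
      (hasDerivAt_pow (κ j) (z j - b j)).comp_hasFDerivAt z
        ((hasFDerivAt_apply j z).sub_const _)
  rw [hderiv.fderiv]
  simp only [_root_.sum_apply, _root_.smul_apply, ContinuousLinearMap.proj_apply,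
    Pi.single_apply, smul_eq_mul, mul_ite, mul_one, mul_zero, sum_ite_eq', mem_univ, if_true]
  ring

lemma sub_mul_fderiv_prod_sub_pow_segment (b x : ι → ℝ) (κ : ι →₀ ℕ) (i : ι) (α : ℝ) :
    (x i - b i) * fderiv ℝ (fun y : ι → ℝ => ∏ j, (y j - b j) ^ κ j)
        (fun j => b j + α * (x j - b j)) (Pi.single i 1)
      = κ i * α ^ (∑ j, κ j - 1) * ∏ j, (x j - b j) ^ κ j := by
  rw [fderiv_prod_sub_pow_apply_single]
  simp only [add_sub_cancel_left]
  cases hk : κ i with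
  | zero => simp
  | succ k =>
    have hsum : ∑ j, κ j - 1 = k + ∑ l ∈ univ.erase i, κ l := by
      rw [← add_sum_erase univ κ (mem_univ i), hk]; omega
    rw [hsum, ← mul_prod_erase univ (fun j => (x j - b j) ^ κ j) (mem_univ i), hk]
    simp only [Nat.add_sub_cancel, mul_pow, prod_mul_distrib, prod_pow_eq_pow_sum, pow_add,
      pow_succ]
    ring

lemma sub_mul_integral_fderiv_sum_prod_sub_pow (s : Finset (ι →₀ ℕ)) (c : (ι →₀ ℕ) → ℝ)
    (b x : ι → ℝ) (i : ι) :
    (x i - b i) * ∫ α in (0:ℝ)..1,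
        fderiv ℝ (fun y : ι → ℝ => ∑ κ ∈ s, c κ * ∏ j, (y j - b j) ^ κ j)
          (fun j => b j + α * (x j - b j)) (Pi.single i 1)
      = ∑ κ ∈ s, ((κ i : ℝ) / ∑ j, (κ j : ℝ)) * (c κ * ∏ j, (x j - b j) ^ κ j) := by
  have hpointwise : ∀ α : ℝ, (x i - b i) * fderiv ℝ
        (fun y : ι → ℝ => ∑ κ ∈ s, c κ * ∏ j, (y j - b j) ^ κ j)
        (fun j => b j + α * (x j - b j)) (Pi.single i 1)
      = ∑ κ ∈ s, c κ * (∏ j, (x j - b j) ^ κ j) * (κ i * α ^ (∑ j, κ j - 1)) := by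
    intro α
    rw [fderiv_fun_sum fun κ _ => by fun_prop, _root_.sum_apply, mul_sum]
    refine sum_congr rfl fun κ _ => ?_
    rw [fderiv_const_mul (by fun_prop), _root_.smul_apply, smul_eq_mul,
      mul_left_comm (x i - b i), sub_mul_fderiv_prod_sub_pow_segment]
    ring
  rw [← intervalIntegral.integral_const_mul, intervalIntegral.integral_congr fun α _ =>
    hpointwise α, intervalIntegral.integral_finsetSum fun κ _ =>
    (by fun_prop : Continuous _).intervalIntegrable _ _]
  refine sum_congr rfl fun κ _ => ?_
  rw [intervalIntegral.integral_const_mul, intervalIntegral.integral_const_mul,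
    natCast_mul_integral_pow_pred (single_le_sum (fun j _ => Nat.zero_le (κ j)) (mem_univ i)),
    Nat.cast_sum]
  ring

end

section
variable {ι : Type*} [Fintype ι]

lemma natCast_div_sum_eq_one_of_support_eq_singleton {κ : ι →₀ ℕ} {i : ι}
    (h : κ.support = {i}) : (κ i : ℝ) / ∑ j, (κ j : ℝ) = 1 := by
  have hκi : κ i ≠ 0 := Finsupp.mem_support_iff.1 (h ▸ mem_singleton_self i)
  rw [sum_eq_single i (fun j _ hj => by simp [← Finsupp.notMem_support_iff, h, hj]) (by simp),
    div_self (Nat.cast_ne_zero.2 hκi)]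

variable [DecidableEq ι]

lemma sum_div_sum_mul_eq_add_sum_powerset (i : ι) (s : Finset (ι →₀ ℕ))
    (t : (ι →₀ ℕ) → ℝ) :
    ∑ κ ∈ s, ((κ i : ℝ) / ∑ j, (κ j : ℝ)) * t κ
      = (∑ κ ∈ s.filter (fun κ => κ.support = {i}), t κ)
      + ∑ S ∈ (univ : Finset ι).powerset.filter (fun S => 1 < S.card ∧ i ∈ S),
          ∑ κ ∈ s.filter (fun κ => κ.support = S), ((κ i : ℝ) / ∑ j, (κ j : ℝ)) * t κ := by
  rw [← sum_fiberwise_of_maps_to (g := Finsupp.support) (t := univ.powerset)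
      fun κ _ => mem_powerset.2 (subset_univ _),
    ← sum_filter_add_sum_filter_not _ fun S => 1 < S.card ∧ i ∈ S, add_comm]
  congr 1
  rw [sum_eq_single_of_mem {i} (by simp)]
  · refine sum_congr rfl fun κ hκ => ?_
    rw [natCast_div_sum_eq_one_of_support_eq_singleton (mem_filter.1 hκ).2, one_mul]
  · intro S hS hne
    have hiS : i ∉ S := by
      intro hiS
      have hcard : S.card ≤ 1 := by
        by_contra hgt
        exact (mem_filter.1 hS).2 ⟨by omega, hiS⟩
      exact hne (eq_of_subset_of_card_le (singleton_subset_iff.2 hiS) (by simpa using hcard)).symm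
    refine sum_eq_zero fun κ hκ => ?_
    rw [Finsupp.notMem_support_iff.1 ((mem_filter.1 hκ).2 ▸ hiS)]
    simp

end

theorem expected_gradients_general {n : ℕ} (f : (Fin n → ℝ) → ℝ) (x : Fin n → ℝ)
    (μ : Measure (Fin n → ℝ))
    (q : (Fin n → ℝ) → MvPolynomial (Fin n) ℝ)
    (hq : ∀ b : Fin n → ℝ, ∀ y : Fin n → ℝ,
      f y = ∑ κ ∈ (q b).support, MvPolynomial.coeff κ (q b) * ∏ j, (y j - b j) ^ κ j)
    (i : Fin n) :
    ∫ b, ((x i - b i) *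
        ∫ α in (0:ℝ)..1,
          fderiv ℝ f (fun j => b j + α * (x j - b j)) (Pi.single i 1)) ∂μ
      = ∫ b,
          ((∑ κ ∈ (q b).support.filter (fun κ => κ.support = {i}),
              MvPolynomial.coeff κ (q b) * ∏ j, (x j - b j) ^ κ j)
          + ∑ S ∈ (univ : Finset (Fin n)).powerset.filter (fun S => 1 < S.card ∧ i ∈ S),
              ∑ κ ∈ (q b).support.filter (fun κ => κ.support = S),
                ((κ i : ℝ) / ∑ j, (κ j : ℝ)) *
                  (MvPolynomial.coeff κ (q b) * ∏ j, (x j - b j) ^ κ j)) ∂μ := by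
  refine integral_congr_ae (ae_of_all _ fun b => ?_)
  dsimp only
  rw [funext (hq b), sub_mul_integral_fderiv_sum_prod_sub_pow,
    sum_div_sum_mul_eq_add_sum_powerset]

/-- Expected Gradients.  `f : ℝⁿ → ℝ` is a polynomial function; for each
baseline `b ∈ ℝⁿ`, `q b` is its (unique, finite) expansion in powers of `x − b`.
`μ` is a probability measure on `ℝⁿ` with finite moments of all orders (every polynomial
function of `b` is `μ`-integrable).  Then the expected Integrated-Gradients attribution of
variable `i` equals the expectation of the allocated Taylor effects. -/
theorem expected_gradients {n : ℕ} (hn : 1 ≤ n) (f : (Fin n → ℝ) → ℝ) (x : Fin n → ℝ)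
    (μ : Measure (Fin n → ℝ)) [IsProbabilityMeasure μ]
    (hmom : ∀ p : MvPolynomial (Fin n) ℝ,
      Integrable (fun b : Fin n → ℝ => MvPolynomial.eval b p) μ)
    (q : (Fin n → ℝ) → MvPolynomial (Fin n) ℝ)
    (hq : ∀ b : Fin n → ℝ, ∀ y : Fin n → ℝ,
      f y = ∑ κ ∈ (q b).support, MvPolynomial.coeff κ (q b) * ∏ j, (y j - b j) ^ κ j)
    (i : Fin n) :
    ∫ b, ((x i - b i) *
        ∫ α in (0:ℝ)..1,
          fderiv ℝ f (fun j => b j + α * (x j - b j)) (Pi.single i 1)) ∂μ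
      = ∫ b,
          ((∑ κ ∈ (q b).support.filter (fun κ => κ.support = {i}),
              MvPolynomial.coeff κ (q b) * ∏ j, (x j - b j) ^ κ j)
          + ∑ S ∈ (univ : Finset (Fin n)).powerset.filter (fun S => 1 < S.card ∧ i ∈ S),
              ∑ κ ∈ (q b).support.filter (fun κ => κ.support = S),
                ((κ i : ℝ) / ∑ j, (κ j : ℝ)) *
                  (MvPolynomial.coeff κ (q b) * ∏ j, (x j - b j) ^ κ j)) ∂μ :=
  expected_gradients_general f x μ q hq i
end

section
/- Let σ : ℝ → ℝ be a polynomial, s ∈ ℝ, z ∈ ℝⁿ, and set y = σ(∑_{j∈N} z_j + s), ỹ = σ(s). Let N⁺ = {j : z_j > 0} and N⁻ = {j : z_j ≤ 0}, and assume ∑_{j ∈ N⁻} z_j ≠ 0. Then for every i ∈ N⁻ and every β ∈ ℝ, the LRP-αβ attribution a_i = β · (z_i / ∑_{j∈N⁻} z_j) · (y − ỹ) satisfies a_i = β·[ ∑_{κ ∈ Ω_i} φ(κ) + ∑_{S ⊆ N, |S| > 1, i ∈ S} ∑_{κ ∈ Ω_S} (κ_i / ∑_{j∈N⁻} κ_j)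 · I(κ) + ∑_{∅ ≠ S ⊆ N⁺} ∑_{κ ∈ Ω_S} (z_i / ∑_{j∈N⁻} z_j) · I(κ) ]. -/
open Finset

/-- The Taylor interaction effect `I(κ)` of the one-layer module
`g(u) = σ(∑ⱼ uⱼ + s)` expanded at the baseline `0` and evaluated at `z`:
`I(κ) = (σ^{(|κ|)}(s)/|κ|!) · (|κ|!/∏ⱼ κⱼ!) · ∏ⱼ zⱼ^{κⱼ}`. -/
noncomputable def taylorEffect {n : ℕ} (σ : Polynomial ℝ) (s : ℝ) (z : Fin n → ℝ)
    (κ : Fin n → ℕ) : ℝ :=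
  ((Polynomial.derivative^[∑ j, κ j] σ).eval s / ((∑ j, κ j).factorial : ℝ)) *
    ((Nat.multinomial Finset.univ κ : ℕ) : ℝ) * ∏ j, z j ^ κ j

/-! With `I(κ) = σ^{(|κ|)}(s) · ∏ⱼ zⱼ^{κⱼ}/κⱼ!`, raising one exponent gives
`(μᵢ + 1) · I_σ(μ + eᵢ) = zᵢ · I_{σ'}(μ)`. Hence, writing `K(κ) = ∑_{j ∈ N⁻} κⱼ`, the sum
`∑_κ (κᵢ / K(κ)) · I(κ)` equals `zᵢ · W` for a `W` that does not depend on `i ∈ N⁻`; summing over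
`i ∈ N⁻` identifies `W` as `(∑_{K(κ) ≠ 0} I(κ)) / ∑_{j ∈ N⁻} zⱼ`. The three groups of the
statement regroup into these terms plus `zᵢ / ∑_{j ∈ N⁻} zⱼ` times the terms with `K(κ) = 0 ≠ κ`,
and all terms with `κ ≠ 0` add up to `y − ỹ` by Taylor's formula. -/

open Polynomial

lemma eval_add_eq_sum_range_iterate_derivative {K : Type*} [Field K] [CharZero K]
    (p : K[X]) (x r : K) :
    p.eval (x + r) = ∑ m ∈ range (p.natDegree + 1),
      (derivative^[m] p).eval r / (m.factorial : K) * x ^ m := by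
  rw [← taylor_eval, eval_eq_sum_range' (by rw [natDegree_taylor]; exact Nat.lt_succ_self _)]
  refine sum_congr rfl fun m _ => ?_
  rw [taylor_coeff, ← factorial_smul_hasseDeriv, LinearMap.smul_apply,
    eval_smul, nsmul_eq_mul, mul_div_cancel_left₀ _ (by exact_mod_cast m.factorial_ne_zero)]

section TaylorEffect

variable {n : ℕ} (σ : ℝ[X]) (s : ℝ) (z : Fin n → ℝ)

lemma taylorEffect_eq_mul_prod (κ : Fin n → ℕ) :
    taylorEffect σ s z κ =
      (derivative^[∑ j, κ j] σ).eval s * ∏ j, z j ^ κ j / ((κ j).factorial : ℝ) := by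
  have hmult : ((Nat.multinomial univ κ : ℕ) : ℝ)
      = ((∑ j, κ j).factorial : ℝ) / ∏ j, ((κ j).factorial : ℝ) := by
    rw [eq_div_iff (prod_ne_zero_iff.mpr fun j _ => by positivity), mul_comm]
    exact_mod_cast Nat.multinomial_spec univ κ
  rw [taylorEffect, hmult, prod_div_distrib]
  field_simp

lemma taylorEffect_eq_zero_of_natDegree_lt {κ : Fin n → ℕ} (h : σ.natDegree < ∑ j, κ j) :
    taylorEffect σ s z κ = 0 := by
  simp [taylorEffect, iterate_derivative_eq_zero h]

lemma taylorEffect_apply_zero : taylorEffect σ s z 0 = σ.eval s := by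
  simp [taylorEffect, Nat.multinomial]

lemma taylorEffect_eq_zero_of_notMem_biUnion_piAntidiag {κ : Fin n → ℕ}
    (h : κ ∉ (range (σ.natDegree + 1)).biUnion fun m => univ.piAntidiag m) :
    taylorEffect σ s z κ = 0 := by
  refine taylorEffect_eq_zero_of_natDegree_lt σ s z (not_le.mp fun hle => h ?_)
  simpa [mem_piAntidiag] using Nat.lt_succ_of_le hle

lemma summable_of_taylorEffect_eq_zero {f : (Fin n → ℕ) → ℝ}
    (hf : ∀ κ, taylorEffect σ s z κ = 0 → f κ = 0) : Summable f :=
  summable_of_ne_finset_zero fun _ hκ =>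
    hf _ (taylorEffect_eq_zero_of_notMem_biUnion_piAntidiag σ s z hκ)

lemma tsum_taylorEffect : ∑' κ, taylorEffect σ s z κ = σ.eval (∑ j, z j + s) := by
  rw [tsum_eq_sum fun _ hκ => taylorEffect_eq_zero_of_notMem_biUnion_piAntidiag σ s z hκ,
    sum_biUnion fun _ _ _ _ hne => disjoint_left.mpr fun _ ha hb =>
      hne ((mem_piAntidiag.mp ha).1.symm.trans (mem_piAntidiag.mp hb).1),
    eval_add_eq_sum_range_iterate_derivative]
  refine sum_congr rfl fun m _ => ?_
  rw [sum_pow_eq_sum_piAntidiag, mul_sum]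
  refine sum_congr rfl fun κ hκ => ?_
  rw [taylorEffect, (mem_piAntidiag.mp hκ).1]
  ring

lemma succ_mul_taylorEffect_add_single (μ : Fin n → ℕ) (i : Fin n) :
    ((μ i : ℝ) + 1) * taylorEffect σ s z (μ + Pi.single i 1) =
      z i * taylorEffect (derivative σ) s z μ := by
  have hfactor : ∀ j, z j ^ (μ + Pi.single i 1 : Fin n → ℕ) j /
        ((μ + Pi.single i 1 : Fin n → ℕ) j).factorial =
      (if j = i then z i / ((μ i : ℝ) + 1) else 1) * (z j ^ μ j / (μ j).factorial) := by
    intro j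
    rcases eq_or_ne j i with rfl | hji
    · simp only [Pi.add_apply, Pi.single_eq_same, if_true, pow_succ, Nat.factorial_succ]
      push_cast
      field_simp
    · simp [hji]
  rw [taylorEffect_eq_mul_prod, taylorEffect_eq_mul_prod, prod_congr rfl fun j _ => hfactor j,
    prod_mul_distrib, Fintype.prod_ite_eq']
  simp only [Pi.add_apply, sum_add_distrib, sum_pi_single', if_pos (mem_univ i),
    Function.iterate_succ_apply]
  field_simp

end TaylorEffect

lemma tsum_natCast_mul_eq_tsum_add_single {ι R : Type*} [DecidableEq ι] [Semiring R]
    [TopologicalSpace R] (f : (ι → ℕ) → R) (i : ι) :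
    ∑' κ, (κ i : R) * f κ = ∑' μ : ι → ℕ, ((μ i : R) + 1) * f (μ + Pi.single i 1) := by
  have hinj : Function.Injective fun μ : ι → ℕ => μ + Pi.single i 1 := add_left_injective _
  rw [← hinj.tsum_eq]
  · simp [Nat.cast_succ]
  · intro κ hκ
    have hκi : κ i ≠ 0 := fun h => hκ (by simp [h])
    refine ⟨κ - Pi.single i 1, funext fun j => ?_⟩
    rcases eq_or_ne j i with rfl | hji
    · simp only [Pi.add_apply, Pi.sub_apply, Pi.single_eq_same]
      omega
    · simp [hji]

section Allocation

variable {n : ℕ} (σ : ℝ[X]) (s : ℝ) (z : Fin n → ℝ) (F : Finset (Fin n))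

lemma tsum_div_sum_mul_taylorEffect {i : Fin n} (hi : i ∈ F) :
    ∑' κ : Fin n → ℕ, ((κ i : ℝ) / ∑ j ∈ F, (κ j : ℝ)) * taylorEffect σ s z κ =
      z i * ∑' μ, taylorEffect (derivative σ) s z μ / (∑ j ∈ F, (μ j : ℝ) + 1) := by
  calc ∑' κ : Fin n → ℕ, ((κ i : ℝ) / ∑ j ∈ F, (κ j : ℝ)) * taylorEffect σ s z κ
      = ∑' κ : Fin n → ℕ, (κ i : ℝ) * (taylorEffect σ s z κ / ∑ j ∈ F, (κ j : ℝ)) :=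
        tsum_congr fun κ => by ring
    _ = ∑' μ : Fin n → ℕ, ((μ i : ℝ) + 1) * taylorEffect σ s z (μ + Pi.single i 1) /
          (∑ j ∈ F, (μ j : ℝ) + 1) := by
        rw [tsum_natCast_mul_eq_tsum_add_single]
        refine tsum_congr fun μ => ?_
        have hmass :
            ∑ j ∈ F, ((μ + Pi.single i 1 : Fin n → ℕ) j : ℝ) = ∑ j ∈ F, (μ j : ℝ) + 1 := by
          simp only [Pi.add_apply, Nat.cast_add, sum_add_distrib]
          simp [Pi.single_apply, hi]
        rw [hmass, mul_div_assoc]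
    _ = z i * ∑' μ, taylorEffect (derivative σ) s z μ / (∑ j ∈ F, (μ j : ℝ) + 1) := by
        simp_rw [succ_mul_taylorEffect_add_single, mul_div_assoc]
        exact tsum_mul_left

lemma tsum_div_sum_mul_taylorEffect_eq {i : Fin n} (hi : i ∈ F) (hF : ∑ j ∈ F, z j ≠ 0) :
    ∑' κ : Fin n → ℕ, ((κ i : ℝ) / ∑ j ∈ F, (κ j : ℝ)) * taylorEffect σ s z κ =
      (z i / ∑ j ∈ F, z j) *
        ∑' κ : Fin n → ℕ, if ∑ j ∈ F, κ j = 0 then 0 else taylorEffect σ s z κ := by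
  set W := ∑' μ, taylorEffect (derivative σ) s z μ / (∑ j ∈ F, (μ j : ℝ) + 1)
  have htotal : (∑' κ : Fin n → ℕ, if ∑ j ∈ F, κ j = 0 then 0 else taylorEffect σ s z κ) =
      (∑ j ∈ F, z j) * W := by
    rw [sum_mul, ← sum_congr rfl fun j hj => tsum_div_sum_mul_taylorEffect σ s z F hj,
      ← Summable.tsum_finsetSum fun j _ =>
        summable_of_taylorEffect_eq_zero σ s z fun κ h => by rw [h, mul_zero]]
    refine tsum_congr fun κ => ?_
    rw [← sum_mul, ← sum_div]
    split_ifs with hκ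
    · simp [← Nat.cast_sum, hκ]
    · rw [div_self (by exact_mod_cast hκ), one_mul]
  rw [tsum_div_sum_mul_taylorEffect σ s z F hi, htotal, ← mul_assoc, div_mul_cancel₀ _ hF]

end Allocation

lemma tsum_ite_add_tsum_ite_eq_eval_sub {n : ℕ} (σ : ℝ[X]) (s : ℝ) (z : Fin n → ℝ)
    (F : Finset (Fin n)) :
    (∑' κ : Fin n → ℕ, if ∑ j ∈ F, κ j = 0 then 0 else taylorEffect σ s z κ) +
        (∑' κ : Fin n → ℕ, if ∑ j ∈ F, κ j = 0 ∧ κ ≠ 0 then taylorEffect σ s z κ else 0) =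
      σ.eval (∑ j, z j + s) - σ.eval s := by
  have hsplit : ∀ κ : Fin n → ℕ,
      ((if ∑ j ∈ F, κ j = 0 then 0 else taylorEffect σ s z κ) +
        if ∑ j ∈ F, κ j = 0 ∧ κ ≠ 0 then taylorEffect σ s z κ else 0) =
      taylorEffect σ s z κ - if κ = 0 then taylorEffect σ s z 0 else 0 := by
    intro κ
    rcases eq_or_ne κ 0 with rfl | hκ
    · simp
    · by_cases hF : ∑ j ∈ F, κ j = 0 <;> simp [hF, hκ]
  rw [← Summable.tsum_add (summable_of_taylorEffect_eq_zero σ s z fun κ h => by simp [h])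
      (summable_of_taylorEffect_eq_zero σ s z fun κ h => by simp [h]),
    tsum_congr hsplit, Summable.tsum_sub (summable_of_taylorEffect_eq_zero σ s z fun _ => id)
      (summable_of_ne_finset_zero (s := {0}) fun κ hκ => by simp_all),
    tsum_ite_eq, tsum_taylorEffect, taylorEffect_apply_zero]

lemma sum_tsum_ite_eq_tsum_ite_mem {α β M : Type*} [AddCommMonoid M] [TopologicalSpace M]
    [T2Space M] [ContinuousAdd M] [DecidableEq β] (A : Finset β) (φ : α → β) (f : α → M)
    (hf : ∀ S ∈ A, Summable fun a => if φ a = S then f a else 0) :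
    ∑ S ∈ A, ∑' a, (if φ a = S then f a else 0) = ∑' a, if φ a ∈ A then f a else 0 := by
  rw [← Summable.tsum_finsetSum hf]
  exact tsum_congr fun a => sum_ite_eq A (φ a) fun _ => f a

section Support

variable {n : ℕ} (z : Fin n → ℝ) (κ : Fin n → ℕ)

lemma filter_ne_zero_mem_nonempty_powerset_iff :
    univ.filter (fun j => κ j ≠ 0) ∈
        (univ.filter (fun j => 0 < z j)).powerset.filter (fun S => S.Nonempty) ↔
      ∑ j ∈ univ.filter (fun j => z j ≤ 0), κ j = 0 ∧ κ ≠ 0 := by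
  simp only [mem_filter, mem_powerset, subset_iff, mem_univ, true_and, filter_nonempty_iff,
    sum_eq_zero_iff, Function.ne_iff, Pi.zero_apply]
  refine and_congr_left fun _ => forall_congr' fun j => ?_
  rw [← not_le, not_imp_not]

lemma div_sum_eq_one_of_filter_ne_zero_eq_singleton {F : Finset (Fin n)} {i : Fin n}
    (hi : i ∈ F) (hκ : univ.filter (fun j => κ j ≠ 0) = {i}) :
    (κ i : ℝ) / ∑ j ∈ F, (κ j : ℝ) = 1 := by
  have hκi : κ i ≠ 0 := by simpa using hκ.ge (mem_singleton_self i)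
  rw [sum_eq_single_of_mem i hi fun j _ hji => ?_, div_self (by exact_mod_cast hκi)]
  have : j ∉ univ.filter (fun j => κ j ≠ 0) := by simp [hκ, hji]
  simpa using this

lemma ite_filter_ne_zero_allocation {i : Fin n} (hi : z i ≤ 0) (c x : ℝ) :
    ((if univ.filter (fun j => κ j ≠ 0) = {i} then x else 0) +
        (if univ.filter (fun j => κ j ≠ 0) ∈
            (univ : Finset (Fin n)).powerset.filter (fun S => 1 < S.card ∧ i ∈ S) then
          ((κ i : ℝ) / ∑ j ∈ univ.filter (fun j => z j ≤ 0), (κ j : ℝ)) * x else 0) +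
        if univ.filter (fun j => κ j ≠ 0) ∈
            (univ.filter (fun j => 0 < z j)).powerset.filter (fun S => S.Nonempty) then
          c * x else 0) =
      ((κ i : ℝ) / ∑ j ∈ univ.filter (fun j => z j ≤ 0), (κ j : ℝ)) * x +
        c * if ∑ j ∈ univ.filter (fun j => z j ≤ 0), κ j = 0 ∧ κ ≠ 0 then x else 0 := by
  have hiN : i ∈ univ.filter (fun j => z j ≤ 0) := by simpa using hi
  simp only [filter_ne_zero_mem_nonempty_powerset_iff, mul_ite, mul_zero]
  simp only [mem_filter, mem_powerset, subset_univ, true_and]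
  by_cases hκi : κ i = 0
  · have hS : univ.filter (fun j => κ j ≠ 0) ≠ {i} := fun h => by
      simpa [hκi] using h.ge (mem_singleton_self i)
    simp [hκi, hS]
  · have hN : ∑ j ∈ univ.filter (fun j => z j ≤ 0), κ j ≠ 0 :=
      fun h => hκi (sum_eq_zero_iff.mp h i hiN)
    have hiS : i ∈ univ.filter (fun j => κ j ≠ 0) := by simpa using hκi
    by_cases hS : univ.filter (fun j => κ j ≠ 0) = {i}
    · simp [hS, hN, div_sum_eq_one_of_filter_ne_zero_eq_singleton κ hiN hS]
    · have hcard : 1 < (univ.filter (fun j => κ j ≠ 0)).card :=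
        one_lt_card_iff_nontrivial.mpr ((nontrivial_iff_ne_singleton hiS).mpr hS)
      simp [hS, hN, hcard, hκi]

end Support

theorem lrp_alpha_beta_neg_general {n : ℕ} (σ : Polynomial ℝ) (s : ℝ)
    (z : Fin n → ℝ)
    (hNm : ∑ j ∈ univ.filter (fun j => z j ≤ 0), z j ≠ 0)
    (i : Fin n) (hi : z i ≤ 0) (β : ℝ) :
    β * (z i / ∑ j ∈ univ.filter (fun j => z j ≤ 0), z j) *
        (σ.eval (∑ j, z j + s) - σ.eval s)
      = β * (
          (∑' κ : Fin n → ℕ,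
              if univ.filter (fun j => κ j ≠ 0) = {i} then taylorEffect σ s z κ else 0)
        + (∑ S ∈ (univ : Finset (Fin n)).powerset.filter (fun S => 1 < S.card ∧ i ∈ S),
            ∑' κ : Fin n → ℕ,
              if univ.filter (fun j => κ j ≠ 0) = S then
                ((κ i : ℝ) / ∑ j ∈ univ.filter (fun j => z j ≤ 0), (κ j : ℝ)) *
                  taylorEffect σ s z κ
              else 0)
        + (∑ S ∈ (univ.filter (fun j => 0 < z j)).powerset.filter (fun S => S.Nonempty),
            ∑' κ : Fin n → ℕ,
              if univ.filter (fun j => κ j ≠ 0) = S then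
                (z i / ∑ j ∈ univ.filter (fun j => z j ≤ 0), z j) *
                  taylorEffect σ s z κ
              else 0)) := by
  have hiN : i ∈ univ.filter (fun j => z j ≤ 0) := by simpa using hi
  have hsummable : ∀ {f : (Fin n → ℕ) → ℝ}, (∀ κ, taylorEffect σ s z κ = 0 → f κ = 0) →
      Summable f := summable_of_taylorEffect_eq_zero σ s z
  rw [sum_tsum_ite_eq_tsum_ite_mem _ _ _ fun _ _ => hsummable fun κ h => by simp [h],
    sum_tsum_ite_eq_tsum_ite_mem _ _ _ fun _ _ => hsummable fun κ h => by simp [h],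
    ← Summable.tsum_add (hsummable fun κ h => by simp [h]) (hsummable fun κ h => by simp [h]),
    ← Summable.tsum_add (hsummable fun κ h => by simp [h]) (hsummable fun κ h => by simp [h]),
    tsum_congr fun κ => ite_filter_ne_zero_allocation z κ hi _ _,
    Summable.tsum_add (hsummable fun κ h => by simp [h]) (hsummable fun κ h => by simp [h]),
    tsum_mul_left, tsum_div_sum_mul_taylorEffect_eq σ s z _ hiN hNm, ← mul_add,
    tsum_ite_add_tsum_ite_eq_eval_sub, mul_assoc]

/-- LRP-αβ, negative group.  For a polynomial activation `σ`, with
`y = σ(∑ⱼ zⱼ + s)`, `ỹ = σ(s)`, `N⁺ = {j : zⱼ > 0}`, `N⁻ = {j : zⱼ ≤ 0}` and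
`∑_{j∈N⁻} zⱼ ≠ 0`: for every `i ∈ N⁻` and every `β ∈ ℝ`, the LRP-αβ attribution
`aᵢ = β·(zᵢ/∑_{j∈N⁻} zⱼ)·(y − ỹ)` decomposes into Taylor independent and interaction
effects with the stated allocation ratios. -/
theorem lrp_alpha_beta_neg {n : ℕ} (hn : 1 ≤ n) (σ : Polynomial ℝ) (s : ℝ)
    (z : Fin n → ℝ)
    (hNm : ∑ j ∈ univ.filter (fun j => z j ≤ 0), z j ≠ 0)
    (i : Fin n) (hi : z i ≤ 0) (β : ℝ) :
    β * (z i / ∑ j ∈ univ.filter (fun j => z j ≤ 0), z j) *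
        (σ.eval (∑ j, z j + s) - σ.eval s)
      = β * (
          (∑' κ : Fin n → ℕ,
              if univ.filter (fun j => κ j ≠ 0) = {i} then taylorEffect σ s z κ else 0)
        + (∑ S ∈ (univ : Finset (Fin n)).powerset.filter (fun S => 1 < S.card ∧ i ∈ S),
            ∑' κ : Fin n → ℕ,
              if univ.filter (fun j => κ j ≠ 0) = S then
                ((κ i : ℝ) / ∑ j ∈ univ.filter (fun j => z j ≤ 0), (κ j : ℝ)) *
                  taylorEffect σ s z κ
              else 0)
        + (∑ S ∈ (univ.filter (fun j => 0 < z j)).powerset.filter (fun S => S.Nonempty),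
            ∑' κ : Fin n → ℕ,
              if univ.filter (fun j => κ j ≠ 0) = S then
                (z i / ∑ j ∈ univ.filter (fun j => z j ≤ 0), z j) *
                  taylorEffect σ s z κ
              else 0)) :=
  lrp_alpha_beta_neg_general σ s z hNm i hi β
end
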